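/- If δ ≠ 1, then ω(x,y,t) = e^{-νt/δ²}[a₁ cos(x/δ) + a₂ sin(x/δ)] + e^{-νt}[a₃ cos y + a₄ sin y] solves the deterministic 2D vorticity equation on D_δ for all t if and only if a₁ = a₂ = 0 or a₃ = a₄ = 0. -/

import Mathlib

/-!
Write `ω = E₁(t) f(x/δ) + E₂(t) g(y)` with `E₁ = e^{-νt/δ²}`, `E₂ = e^{-νt}` and sinusoids `f`, `g`.
Each mode solves the heat equation, so the viscous terms cancel against `∂ₜω`, and only the
advection survives: with `ψ = δ² E₁ f(x/δ) + E₂ g(y)`,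
`ψ_y ω_x − ψ_x ω_y = (δ⁻¹ − δ) E₁ E₂ f'(x/δ) g'(y)`.
As `δ⁻¹ ≠ δ`, the equation holds everywhere iff `f' ⊗ g' ≡ 0`, i.e. iff `f ≡ 0` or `g ≡ 0`.
-/

open Real

theorem forall_mul_eq_zero_iff {α β M₀ : Type*} [MulZeroClass M₀] [NoZeroDivisors M₀]
    (f : α → M₀) (g : β → M₀) : (∀ x y, f x * g y = 0) ↔ f = 0 ∨ g = 0 := by
  refine ⟨fun h => ?_, ?_⟩
  · by_contra! hfg
    obtain ⟨x, hx⟩ := Function.ne_iff.mp hfg.1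
    obtain ⟨y, hy⟩ := Function.ne_iff.mp hfg.2
    exact mul_ne_zero hx hy (h x y)
  · rintro (rfl | rfl) x y <;> simp

theorem inv_sub_self_ne_zero {K : Type*} [Field K] [LinearOrder K] [IsStrictOrderedRing K]
    {δ : K} (hδ : 0 < δ) (hδ1 : δ ≠ 1) : δ⁻¹ - δ ≠ 0 := by
  intro h
  have hsq : δ ^ 2 = 1 := by field_simp at h; linarith
  exact hδ1 ((pow_eq_one_iff_of_nonneg hδ.le two_ne_zero).mp hsq)

theorem comp_div_eq_zero_iff {K M : Type*} [DivisionRing K] [Zero M] {f : K → M} {δ : K}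
    (hδ : δ ≠ 0) : (fun x => f (x / δ)) = 0 ↔ f = 0 := by
  refine ⟨fun h => funext fun θ => ?_, fun h => by simp only [h]; rfl⟩
  simpa [hδ] using congrFun h (θ * δ)

noncomputable section

def sinusoid (a b θ : ℝ) : ℝ := a * cos θ + b * sin θ

theorem hasDerivAt_sinusoid (a b θ : ℝ) : HasDerivAt (sinusoid a b) (sinusoid b (-a) θ) θ := by
  have := ((hasDerivAt_cos θ).const_mul a).add ((hasDerivAt_sin θ).const_mul b)
  exact this.congr_deriv (by simp only [sinusoid]; ring)

theorem deriv_sinusoid (a b : ℝ) : deriv (sinusoid a b) = sinusoid b (-a) :=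
  funext fun θ => (hasDerivAt_sinusoid a b θ).deriv

theorem deriv_sinusoid_comp_div (a b δ : ℝ) :
    deriv (fun x => sinusoid a b (x / δ)) = fun x => sinusoid b (-a) (x / δ) / δ := by
  funext x
  have hdiv : HasDerivAt (fun x : ℝ => x / δ) δ⁻¹ x := by
    simpa using (hasDerivAt_id x).div_const δ
  exact (((hasDerivAt_sinusoid a b (x / δ)).comp x hdiv).congr_deriv
    (div_eq_mul_inv _ _).symm).deriv

theorem sinusoid_neg_neg (a b θ : ℝ) : sinusoid (-a) (-b) θ = -sinusoid a b θ := by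
  simp only [sinusoid]; ring

theorem sinusoid_eq_zero_iff {a b : ℝ} : sinusoid a b = 0 ↔ a = 0 ∧ b = 0 := by
  refine ⟨fun h => ⟨?_, ?_⟩, fun ⟨ha, hb⟩ => by funext θ; simp [sinusoid, ha, hb]⟩
  · simpa [sinusoid] using congrFun h 0
  · simpa [sinusoid] using congrFun h (π / 2)

/-- `∂ₜω − νΔω + u·∇ω` for the velocity `u = (∂_y ψ, −∂_x ψ)` of the stream function `ψ`. -/
def vorticityResidual (ν : ℝ) (ω ψ : ℝ → ℝ → ℝ → ℝ) (x y t : ℝ) : ℝ :=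
  deriv (fun s => ω x y s) t
    - (ν * (deriv (deriv (fun a => ω a y t)) x + deriv (deriv (fun b => ω x b t)) y)
      - (deriv (fun b => ψ x b t) y * deriv (fun a => ω a y t) x
        + -(deriv (fun a => ψ a y t) x) * deriv (fun b => ω x b t) y))

def twoModeVorticity (δ ν a₁ a₂ a₃ a₄ : ℝ) (x y t : ℝ) : ℝ :=
  exp (-ν * t / δ ^ 2) * sinusoid a₁ a₂ (x / δ) + exp (-ν * t) * sinusoid a₃ a₄ y

def twoModeStream (δ ν a₁ a₂ a₃ a₄ : ℝ) (x y t : ℝ) : ℝ :=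
  δ ^ 2 * exp (-ν * t / δ ^ 2) * sinusoid a₁ a₂ (x / δ) + exp (-ν * t) * sinusoid a₃ a₄ y

theorem vorticityResidual_twoMode (δ ν a₁ a₂ a₃ a₄ x y t : ℝ) (hδ : δ ≠ 0) :
    vorticityResidual ν (twoModeVorticity δ ν a₁ a₂ a₃ a₄) (twoModeStream δ ν a₁ a₂ a₃ a₄) x y t
      = (δ⁻¹ - δ) * (exp (-ν * t / δ ^ 2) * exp (-ν * t))
        * (sinusoid a₂ (-a₁) (x / δ) * sinusoid a₄ (-a₃) y) := by
  have hE₁ : HasDerivAt (fun s => exp (-ν * s / δ ^ 2)) (exp (-ν * t / δ ^ 2) * (-ν / δ ^ 2)) t :=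
    (((hasDerivAt_id t).const_mul (-ν)).div_const (δ ^ 2)).exp.congr_deriv (by simp)
  have hE₂ : HasDerivAt (fun s => exp (-ν * s)) (exp (-ν * t) * -ν) t :=
    ((hasDerivAt_id t).const_mul (-ν)).exp.congr_deriv (by simp)
  have ht : HasDerivAt
      (fun s => exp (-ν * s / δ ^ 2) * sinusoid a₁ a₂ (x / δ) + exp (-ν * s) * sinusoid a₃ a₄ y)
      (exp (-ν * t / δ ^ 2) * (-ν / δ ^ 2) * sinusoid a₁ a₂ (x / δ)
        + exp (-ν * t) * -ν * sinusoid a₃ a₄ y) t :=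
    (hE₁.mul_const _).add (hE₂.mul_const _)
  simp only [vorticityResidual, twoModeVorticity, twoModeStream, ht.deriv, deriv_add_const',
    deriv_const_add', deriv_const_mul_field', deriv_sinusoid_comp_div, deriv_sinusoid,
    deriv_div_const, sinusoid_neg_neg]
  field_simp
  ring

end

theorem family_solves_iff_bar_general (δ ν a₁ a₂ a₃ a₄ : ℝ) (hδ : 0 < δ) (hδ1 : δ ≠ 1)
    (ω ψ : ℝ → ℝ → ℝ → ℝ)
    (hω : ω = fun x y t =>
      Real.exp (-ν * t / δ ^ 2) * (a₁ * Real.cos (x / δ) + a₂ * Real.sin (x / δ))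
        + Real.exp (-ν * t) * (a₃ * Real.cos y + a₄ * Real.sin y))
    (hψ : ψ = fun x y t =>
      δ ^ 2 * Real.exp (-ν * t / δ ^ 2) * (a₁ * Real.cos (x / δ) + a₂ * Real.sin (x / δ))
        + Real.exp (-ν * t) * (a₃ * Real.cos y + a₄ * Real.sin y))
    (u₁ u₂ : ℝ → ℝ → ℝ → ℝ)
    (hu₁ : u₁ = fun x y t => deriv (fun b => ψ x b t) y)
    (hu₂ : u₂ = fun x y t => -(deriv (fun a => ψ a y t) x)) :
    (∀ x y t : ℝ,
      deriv (fun s => ω x y s) t =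
        ν * (deriv (deriv (fun a => ω a y t)) x + deriv (deriv (fun b => ω x b t)) y)
          - (u₁ x y t * deriv (fun a => ω a y t) x
              + u₂ x y t * deriv (fun b => ω x b t) y))
      ↔ ((a₁ = 0 ∧ a₂ = 0) ∨ (a₃ = 0 ∧ a₄ = 0)) := by
  change ω = twoModeVorticity δ ν a₁ a₂ a₃ a₄ at hω
  change ψ = twoModeStream δ ν a₁ a₂ a₃ a₄ at hψ
  subst hω hψ hu₁ hu₂
  have hδ0 : δ ≠ 0 := hδ.ne'
  calc (∀ x y t, _) ↔ ∀ x y t, vorticityResidual ν (twoModeVorticity δ ν a₁ a₂ a₃ a₄)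
          (twoModeStream δ ν a₁ a₂ a₃ a₄) x y t = 0 :=
        forall₃_congr fun _ _ _ => sub_eq_zero.symm
    _ ↔ ∀ x y, sinusoid a₂ (-a₁) (x / δ) * sinusoid a₄ (-a₃) y = 0 := by
        simp only [vorticityResidual_twoMode _ _ _ _ _ _ _ _ _ hδ0, mul_eq_zero,
          inv_sub_self_ne_zero hδ hδ1, exp_ne_zero, or_self, false_or, forall_const]
    _ ↔ (fun x => sinusoid a₂ (-a₁) (x / δ)) = 0 ∨ sinusoid a₄ (-a₃) = 0 :=
        forall_mul_eq_zero_iff _ _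
    _ ↔ _ := by
        rw [comp_div_eq_zero_iff hδ0, sinusoid_eq_zero_iff, sinusoid_eq_zero_iff, neg_eq_zero,
          neg_eq_zero, and_comm, and_comm (a := a₄ = 0)]

/-- If `δ ≠ 1`, then
`ω(x,y,t) = e^{-νt/δ²}[a₁ cos(x/δ) + a₂ sin(x/δ)] + e^{-νt}[a₃ cos y + a₄ sin y]`
solves the deterministic 2D vorticity equation `∂_t ω = ν Δω − u·∇ω` (with `u` given by the
Biot–Savart law via the stream function `ψ = (−Δ)^{-1} ω`) for all `t`
if and only if `a₁ = a₂ = 0` or `a₃ = a₄ = 0`. -/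
theorem family_solves_iff_bar (δ ν a₁ a₂ a₃ a₄ : ℝ) (hδ : 0 < δ) (hδ1 : δ ≠ 1) (hν : 0 < ν)
    (ω ψ : ℝ → ℝ → ℝ → ℝ)
    (hω : ω = fun x y t =>
      Real.exp (-ν * t / δ ^ 2) * (a₁ * Real.cos (x / δ) + a₂ * Real.sin (x / δ))
        + Real.exp (-ν * t) * (a₃ * Real.cos y + a₄ * Real.sin y))
    (hψ : ψ = fun x y t =>
      δ ^ 2 * Real.exp (-ν * t / δ ^ 2) * (a₁ * Real.cos (x / δ) + a₂ * Real.sin (x / δ))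
        + Real.exp (-ν * t) * (a₃ * Real.cos y + a₄ * Real.sin y))
    (u₁ u₂ : ℝ → ℝ → ℝ → ℝ)
    (hu₁ : u₁ = fun x y t => deriv (fun b => ψ x b t) y)
    (hu₂ : u₂ = fun x y t => -(deriv (fun a => ψ a y t) x)) :
    (∀ x y t : ℝ,
      deriv (fun s => ω x y s) t =
        ν * (deriv (deriv (fun a => ω a y t)) x + deriv (deriv (fun b => ω x b t)) y)
          - (u₁ x y t * deriv (fun a => ω a y t) x
              + u₂ x y t * deriv (fun b => ω x b t) y))
      ↔ ((a₁ = 0 ∧ a₂ = 0) ∨ (a₃ = 0 ∧ a₄ = 0)) :=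
  family_solves_iff_bar_general δ ν a₁ a₂ a₃ a₄ hδ hδ1 ω ψ hω hψ u₁ u₂ hu₁ hu₂
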